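/- arXiv:2008.07659 — 2 statements merged into one kernel-verified Lean document; each statement's English description precedes it below -/
import Mathlib

section
/- If (x, y, z) ∈ ℤ³ satisfies x² + y² + z² = xyz, then 3 divides each of x, y, and z. -/
/-- Integer points on the character variety x² + y² + z² = xyz have all
coordinates divisible by 3. -/
theorem three_dvd_of_character_variety (x y z : ℤ)
    (h : x ^ 2 + y ^ 2 + z ^ 2 = x * y * z) :
    3 ∣ x ∧ 3 ∣ y ∧ 3 ∣ z := by
  have key : ∀ a b c : ZMod 3, a ^ 2 + b ^ 2 + c ^ 2 = a * b * c → a = 0 ∧ b = 0 ∧ c = 0 := by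
    decide
  have h3 : ((x : ZMod 3)) ^ 2 + (y : ZMod 3) ^ 2 + (z : ZMod 3) ^ 2
      = (x : ZMod 3) * (y : ZMod 3) * (z : ZMod 3) := by
    have := congrArg (Int.cast : ℤ → ZMod 3) h
    push_cast at this
    exact this
  obtain ⟨hx, hy, hz⟩ := key _ _ _ h3
  exact ⟨(ZMod.intCast_zmod_eq_zero_iff_dvd x 3).mp hx,
    (ZMod.intCast_zmod_eq_zero_iff_dvd y 3).mp hy,
    (ZMod.intCast_zmod_eq_zero_iff_dvd z 3).mp hz⟩
end

section
/- If (x, y, z) is a Markov triple with x ≤ y ≤ z and z > 1, then 3xy − z < z; consequently, applying the Vieta move to the largest coordinate of a non-trivial Markov triple strictly decreases the maximum coordinate, so every Markov triple can be reduced to (1,1,1) by finitely many Vieta moves and permutations. -/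
def IsMarkovTriple (t : ℤ × ℤ × ℤ) : Prop :=
  0 < t.1 ∧ 0 < t.2.1 ∧ 0 < t.2.2 ∧
    t.1 ^ 2 + t.2.1 ^ 2 + t.2.2 ^ 2 = 3 * t.1 * t.2.1 * t.2.2

/-- s and t are triples with the same coordinates in some order. -/
def IsPermOf (s t : ℤ × ℤ × ℤ) : Prop :=
  t = (s.1, s.2.1, s.2.2) ∨ t = (s.1, s.2.2, s.2.1) ∨ t = (s.2.1, s.1, s.2.2) ∨
  t = (s.2.1, s.2.2, s.1) ∨ t = (s.2.2, s.1, s.2.1) ∨ t = (s.2.2, s.2.1, s.1)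

/-- One step: a Vieta move on the last coordinate, or a permutation of the
coordinates. -/
def MarkovStep (s t : ℤ × ℤ × ℤ) : Prop :=
  t = (s.1, s.2.1, 3 * s.1 * s.2.1 - s.2.2) ∨ IsPermOf s t

lemma key (x y z : ℤ) (hx : 0 < x) (hy : 0 < y) (hz : 0 < z)
    (hm : x ^ 2 + y ^ 2 + z ^ 2 = 3 * x * y * z) (hxy : x ≤ y) (hyz : y ≤ z)
    (h1 : 1 < z) : 3 * x * y - z < z := by
  by_contra h
  push_neg at h
  nlinarith [mul_pos hx hy, mul_pos hy hz, sq_nonneg (z - y), sq_nonneg (x - 1),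
    mul_nonneg (sub_nonneg.2 hxy) (sub_nonneg.2 hyz), mul_pos hx hz,
    mul_le_mul_of_nonneg_left h (le_of_lt hz)]

lemma perm_markov {s t : ℤ × ℤ × ℤ} (h : IsPermOf s t) (hm : IsMarkovTriple s) :
    IsMarkovTriple t := by
  obtain ⟨a, b, c⟩ := s
  obtain ⟨h1, h2, h3, h4⟩ := hm
  rcases h with h | h | h | h | h | h <;> subst h <;>
    exact ⟨by assumption, by assumption, by assumption, by simp at h4 ⊢; linarith [h4]⟩

lemma exists_sorted (t : ℤ × ℤ × ℤ) :
    ∃ x y z : ℤ, IsPermOf t (x, y, z) ∧ x ≤ y ∧ y ≤ z := by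
  obtain ⟨a, b, c⟩ := t
  rcases le_total a b with h1 | h1 <;> rcases le_total b c with h2 | h2 <;>
    rcases le_total a c with h3 | h3
  · exact ⟨a, b, c, Or.inl rfl, h1, h2⟩
  · exact ⟨a, b, c, Or.inl rfl, h1, h2⟩
  · exact ⟨a, c, b, Or.inr (Or.inl rfl), h3, h2⟩
  · exact ⟨c, a, b, Or.inr (Or.inr (Or.inr (Or.inr (Or.inl rfl)))), h3, h1⟩
  · exact ⟨b, a, c, Or.inr (Or.inr (Or.inl rfl)), h1, h3⟩
  · exact ⟨b, c, a, Or.inr (Or.inr (Or.inr (Or.inl rfl))), h2, h3⟩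
  · exact ⟨c, b, a, Or.inr (Or.inr (Or.inr (Or.inr (Or.inr rfl)))), h2, h1⟩
  · exact ⟨c, b, a, Or.inr (Or.inr (Or.inr (Or.inr (Or.inr rfl)))), h2, h1⟩

lemma reduce : ∀ n : ℕ, ∀ t : ℤ × ℤ × ℤ, IsMarkovTriple t →
    (t.1 + t.2.1 + t.2.2).toNat ≤ n →
    Relation.ReflTransGen MarkovStep t (1, 1, 1) := by
  intro n
  induction n using Nat.strong_induction_on with
  | _ n ih =>
    intro t ht hn
    obtain ⟨x, y, z, hperm, hxy, hyz⟩ := exists_sorted t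
    have hm : IsMarkovTriple (x, y, z) := perm_markov hperm ht
    obtain ⟨hx, hy, hz, heq⟩ := hm
    simp only at hx hy hz heq
    have hstep1 : MarkovStep t (x, y, z) := Or.inr hperm
    have hsum : x + y + z = t.1 + t.2.1 + t.2.2 := by
      obtain ⟨a, b, c⟩ := t
      rcases hperm with h | h | h | h | h | h <;>
        · simp at h ⊢; omega
    rcases le_or_gt z 1 with h1 | h1
    · have hx1 : x = 1 := le_antisymm (le_trans hxy (le_trans hyz h1)) hx
      have hy1 : y = 1 := le_antisymm (le_trans hyz h1) hy
      have hz1 : z = 1 := le_antisymm h1 hz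
      subst hx1; subst hy1; subst hz1
      exact Relation.ReflTransGen.single hstep1
    · set z' := 3 * x * y - z with hz'def
      have hlt : z' < z := key x y z hx hy hz heq hxy hyz h1
      have hz'pos : 0 < z' := by
        rcases le_or_gt z' 0 with h | h
        · exfalso
          have : z * z' = x ^ 2 + y ^ 2 := by rw [hz'def]; ring_nf; linarith
          nlinarith [mul_pos hx hx, mul_pos hy hy, mul_nonpos_of_nonneg_of_nonpos hz.le h]
        · exact h
      have hm' : IsMarkovTriple (x, y, z') := by
        refine ⟨hx, hy, hz'pos, ?_⟩
        simp only [hz'def]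
        ring_nf
        ring_nf at heq
        linarith
      have hstep2 : MarkovStep (x, y, z) (x, y, z') := Or.inl rfl
      have hsum' : ((x : ℤ) + y + z').toNat < n := by
        have h1 : (0:ℤ) < x + y + z' := by positivity
        have h2 : x + y + z' < x + y + z := by linarith
        omega
      exact (Relation.ReflTransGen.single hstep1).trans
        ((Relation.ReflTransGen.single hstep2).trans
          (ih _ hsum' (x, y, z') hm' le_rfl))

/-- Descent: if (x,y,z) is a Markov triple with x ≤ y ≤ z and z > 1, then
3xy − z < z; consequently every Markov triple can be reduced to (1,1,1) by
finitely many Vieta moves and permutations. -/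
theorem markov_descent :
    (∀ x y z : ℤ, IsMarkovTriple (x, y, z) → x ≤ y → y ≤ z → 1 < z →
      3 * x * y - z < z) ∧
    (∀ t : ℤ × ℤ × ℤ, IsMarkovTriple t →
      Relation.ReflTransGen MarkovStep t (1, 1, 1)) := by
  constructor
  · intro x y z ⟨hx, hy, hz, heq⟩ hxy hyz h1
    exact key x y z hx hy hz heq hxy hyz h1
  · intro t ht
    exact reduce (t.1 + t.2.1 + t.2.2).toNat t ht le_rfl
end
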